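/- Let $M$ be a convex set of equivalent probability measures, and let $A_0$ (the set of nonnegative random variables $\xi$ with $E^P\xi = 1$ for all $P \in M$) be uniformly integrable with respect to every $P \in M$. Suppose $f_N \ge 0$ is an $\mathcal{F}_N$-measurable random variable, integrable under each $P \in M$, and there exist $\alpha_0 < \infty$ and $\xi_0 \in A_0$ with $f_N \le \alpha_0 E^P[\xi_0 \mid \mathcal{F}_N]$ a.s. Define $G_{\alpha_0} = \{\alpha \in [0, \alpha_0] : \exists \xi_\alpha \in A_0, \; f_N \le \alpha E^P[\xi_\alpha \mid \mathcal{F}_N] \text{ a.s.}\}$ and $f_0 = \inf G_{\alpha_0}$. Then there exists $\zeta_0 \in A_0$ with $f_N \le f_0 E^P[\zeta_0 \mid \mathcal{F}_N]$ a.s., and consequently $f_0 \ge \sup_{P \in M} E^P f_N$. -/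

import Mathlib

/-!
Take a minimizing sequence `αₙ → f₀` in `G_{α₀}` with witnesses `ξₙ ∈ A₀`. Along an ultrafilter
the limits `A ↦ lim ∫_A ξₙ dP` exist, and uniform integrability makes them countably additive, so
they are the set integrals of a density `ζ_P` (a Dunford–Pettis type compactness argument). Any two
measures of `M` are dominated by twice their midpoint, which lies in `M`, and such weak limits
pass to measures with bounded density; hence all the `ζ_P` agree with one `ζ₀ ∈ A₀`. Letting
`n → ∞` in `∫_A f_N dP ≤ αₙ ∫_A ξₙ dP` for `A ∈ ℱ_N` gives `f_N ≤ f₀ E^P[ζ₀ | ℱ_N]`, and taking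
expectations gives `E^P f_N ≤ f₀`.
-/

open MeasureTheory Filter Set Function
open scoped ENNReal Topology

namespace MeasureTheory

variable {Ω ι : Type*} {m0 : MeasurableSpace Ω} {μ : Measure Ω}

lemma UnifIntegrable.comp {κ β : Type*} [NormedAddCommGroup β] {f : ι → Ω → β} {p : ℝ≥0∞}
    (hf : UnifIntegrable f p μ) (g : κ → ι) : UnifIntegrable (f ∘ g) p μ := fun _ hε =>
  let ⟨δ, hδ, hfδ⟩ := hf hε
  ⟨δ, hδ, fun k => hfδ (g k)⟩

lemma UnifIntegrable.exists_setIntegral_le {f : ι → Ω → ℝ} (hf : UnifIntegrable f 1 μ)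
    {ε : ℝ} (hε : 0 < ε) :
    ∃ δ > 0, ∀ i s, MeasurableSet s → μ s ≤ ENNReal.ofReal δ → ∫ x in s, f i x ∂μ ≤ ε := by
  obtain ⟨δ, hδ, hfδ⟩ := hf hε
  refine ⟨δ, hδ, fun i s hs hμs => ?_⟩
  calc ∫ x in s, f i x ∂μ ≤ ‖∫ x in s, f i x ∂μ‖ := Real.le_norm_self _
    _ ≤ (∫⁻ x in s, ENNReal.ofReal ‖f i x‖ ∂μ).toReal := norm_integral_le_lintegral_norm _
    _ = (eLpNorm (s.indicator (f i)) 1 μ).toReal := by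
      simp_rw [eLpNorm_indicator_eq_eLpNorm_restrict hs, eLpNorm_one_eq_lintegral_enorm,
        ofReal_norm]
    _ ≤ ε := ENNReal.toReal_le_of_le_ofReal hε.le (hfδ i s hs hμs)

lemma hasSum_iUnion_of_tendsto_setIntegral [IsFiniteMeasure μ] {l : Filter ι} [l.NeBot]
    {ξ : ι → Ω → ℝ} (hpos : ∀ i x, 0 ≤ ξ i x) (hint : ∀ i, Integrable (ξ i) μ)
    (hui : UnifIntegrable ξ 1 μ) {L : Set Ω → ℝ}
    (hL : ∀ A, MeasurableSet A → Tendsto (fun i => ∫ x in A, ξ i x ∂μ) l (𝓝 (L A)))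
    {s : ℕ → Set Ω} (hs : ∀ n, MeasurableSet (s n)) (hd : Pairwise (Disjoint on s)) :
    HasSum (fun n => L (s n)) (L (⋃ n, s n)) := by
  set T : ℕ → Set Ω := fun m => ⋃ n, s (n + m)
  have hT : ∀ m, MeasurableSet (T m) := fun m => .iUnion fun n => hs _
  have hL0 : ∀ A, MeasurableSet A → 0 ≤ L A := fun A hA =>
    ge_of_tendsto (hL A hA) (.of_forall fun i => integral_nonneg (hpos i))
  have hsplit : ∀ m, L (⋃ n, s n) = ∑ n ∈ Finset.range m, L (s n) + L (T m) := by
    intro m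
    refine tendsto_nhds_unique (hL _ (.iUnion hs)) <|
      ((tendsto_finsetSum _ fun n _ => hL _ (hs n)).add (hL _ (hT m))).congr fun i => ?_
    have hsum := hasSum_integral_iUnion hs hd (hint i).integrableOn
    have htail : HasSum (fun n => ∫ x in s (n + m), ξ i x ∂μ) (∫ x in T m, ξ i x ∂μ) :=
      hasSum_integral_iUnion (fun n => hs _) (fun a b hab => hd (by omega)) (hint i).integrableOn
    rw [← hsum.tsum_eq, ← htail.tsum_eq, hsum.summable.sum_add_tsum_nat_add m]
  have hTμ : Tendsto (fun m => μ (T m)) atTop (𝓝 0) := by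
    simpa [Function.comp_def, T, ← iUnion_ge_eq_iUnion_nat_add] using
      tendsto_measure_biUnion_Ici_zero_of_pairwise_disjoint (fun n => (hs n).nullMeasurableSet) hd
  have hLT : Tendsto (fun m => L (T m)) atTop (𝓝 0) := by
    refine tendsto_order.2 ⟨fun a ha => .of_forall fun m => ha.trans_le (hL0 _ (hT m)),
      fun a ha => ?_⟩
    obtain ⟨δ, hδ, hδε⟩ := hui.exists_setIntegral_le (half_pos ha)
    filter_upwards [hTμ.eventually_le_const (ENNReal.ofReal_pos.2 hδ)] with m hm
    exact (le_of_tendsto (hL _ (hT m)) (.of_forall fun i => hδε i _ (hT m) hm)).trans_lt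
      (half_lt_self ha)
  rw [hasSum_iff_tendsto_nat_of_nonneg fun n => hL0 _ (hs n)]
  have := (tendsto_const_nhds (x := L (⋃ n, s n))).sub hLT
  rw [sub_zero] at this
  exact this.congr fun m => by rw [hsplit m, add_sub_cancel_right]

theorem exists_tendsto_setIntegral_of_unifIntegrable [IsFiniteMeasure μ] (𝒰 : Ultrafilter ι)
    {ξ : ι → Ω → ℝ} (hpos : ∀ i x, 0 ≤ ξ i x) (hint : ∀ i, Integrable (ξ i) μ)
    {C : ℝ} (hbdd : ∀ i, ∫ x, ξ i x ∂μ ≤ C) (hui : UnifIntegrable ξ 1 μ) :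
    ∃ h : Ω → ℝ, (∀ x, 0 ≤ h x) ∧ Integrable h μ ∧ ∀ A, MeasurableSet A →
      Tendsto (fun i => ∫ x in A, ξ i x ∂μ) 𝒰 (𝓝 (∫ x in A, h x ∂μ)) := by
  have hlim : ∀ A, ∃ a, Tendsto (fun i => ∫ x in A, ξ i x ∂μ) 𝒰 (𝓝 a) := fun A => by
    have hmem : ∀ i, ∫ x in A, ξ i x ∂μ ∈ Icc 0 C := fun i =>
      ⟨integral_nonneg (hpos i),
        (setIntegral_le_integral (hint i) (.of_forall (hpos i))).trans (hbdd i)⟩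
    obtain ⟨a, -, ha⟩ := isCompact_Icc.ultrafilter_le_nhds (𝒰.map _)
      (le_principal_iff.2 (Ultrafilter.mem_map.2 (univ_mem' hmem)))
    exact ⟨a, ha⟩
  choose L hL using hlim
  have hL0 : ∀ A, 0 ≤ L A := fun A =>
    ge_of_tendsto (hL A) (.of_forall fun i => integral_nonneg (hpos i))
  have hLempty : L ∅ = 0 := tendsto_nhds_unique (hL ∅) (by simp)
  let ν : Measure Ω := Measure.ofMeasurable (fun A _ => ENNReal.ofReal (L A))
    (by simp [hLempty]) fun s hs hd => by
      have hsum := hasSum_iUnion_of_tendsto_setIntegral hpos hint hui (fun A _ => hL A) hs hd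
      rw [← hsum.tsum_eq, ENNReal.ofReal_tsum_of_nonneg (fun n => hL0 _) hsum.summable]
  have hνA : ∀ A, MeasurableSet A → ν A = ENNReal.ofReal (L A) :=
    fun A hA => Measure.ofMeasurable_apply A hA
  have : IsFiniteMeasure ν := ⟨by rw [hνA univ .univ]; exact ENNReal.ofReal_lt_top⟩
  have hνμ : ν ≪ μ := Measure.AbsolutelyContinuous.mk fun A hA hμA => by
    have hLA : L A = 0 := tendsto_nhds_unique (hL A) (by simp [Measure.restrict_eq_zero.2 hμA])
    rw [hνA A hA, hLA, ENNReal.ofReal_zero]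
  refine ⟨fun x => (ν.rnDeriv μ x).toReal, fun x => ENNReal.toReal_nonneg,
    Measure.integrable_toReal_rnDeriv, fun A hA => ?_⟩
  rw [Measure.setIntegral_toReal_rnDeriv hνμ, measureReal_def, hνA A hA,
    ENNReal.toReal_ofReal (hL0 A)]
  exact hL A

lemma Measure.rnDeriv_le_of_le_smul [SigmaFinite μ] {Q : Measure Ω} {c : ℝ≥0∞} (h : Q ≤ c • μ) :
    Q.rnDeriv μ ≤ᵐ[μ] fun _ => c := by
  refine ae_le_of_forall_setLIntegral_le_of_sigmaFinite (Q.measurable_rnDeriv μ)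
    fun s hs _ => ?_
  calc ∫⁻ x in s, Q.rnDeriv μ x ∂μ ≤ Q s := Measure.setLIntegral_rnDeriv_le s
    _ ≤ c * μ s := h s
    _ = ∫⁻ _ in s, c ∂μ := (setLIntegral_const s c).symm

lemma exists_simpleFunc_forall_abs_sub_le {g : Ω → ℝ} (hg : Measurable g) {C : ℝ}
    (hgC : ∀ x, |g x| ≤ C) {ε : ℝ} (hε : 0 < ε) : ∃ φ : SimpleFunc Ω ℝ, ∀ x, |g x - φ x| ≤ ε := by
  let k : SimpleFunc Ω ℤ :=
    { toFun := fun x => ⌊g x / ε⌋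
      measurableSet_fiber' := fun n => (hg.div_const ε).floor (measurableSet_singleton n)
      finite_range' := (Set.finite_Icc ⌊-C / ε⌋ ⌊C / ε⌋).subset <| range_subset_iff.2 fun x =>
        ⟨Int.floor_mono (div_le_div_of_nonneg_right (neg_le_of_abs_le (hgC x)) hε.le),
          Int.floor_mono (div_le_div_of_nonneg_right (le_of_abs_le (hgC x)) hε.le)⟩ }
  refine ⟨k.map fun n : ℤ => ε * n, fun x => ?_⟩
  have hlow : ε * ⌊g x / ε⌋ ≤ g x := by
    have := mul_le_mul_of_nonneg_left (Int.floor_le (g x / ε)) hε.le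
    rwa [mul_div_cancel₀ _ hε.ne'] at this
  have hup : g x < ε * ⌊g x / ε⌋ + ε := by
    have := mul_lt_mul_of_pos_left (Int.lt_floor_add_one (g x / ε)) hε
    rwa [mul_div_cancel₀ _ hε.ne', mul_add, mul_one] at this
  change |g x - ε * (⌊g x / ε⌋ : ℝ)| ≤ ε
  exact abs_le.2 ⟨by linarith, by linarith⟩

lemma tendsto_of_forall_approx {l : Filter ι} {a : ι → ℝ} {x : ℝ}
    (h : ∀ δ > 0, ∃ (b : ι → ℝ) (y : ℝ), Tendsto b l (𝓝 y) ∧ (∀ i, |a i - b i| ≤ δ) ∧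
      |x - y| ≤ δ) :
    Tendsto a l (𝓝 x) := by
  refine Metric.tendsto_nhds.2 fun ε hε => ?_
  obtain ⟨b, y, hb, hab, hxy⟩ := h (ε / 3) (by positivity)
  filter_upwards [Metric.tendsto_nhds.1 hb (ε / 3) (by positivity)] with i hi
  rw [Real.dist_eq] at hi ⊢
  calc |a i - x| ≤ |a i - b i| + |b i - y| + |x - y| := by
        have := abs_sub_le (a i) (b i) x
        have := abs_sub_le (b i) y x
        rw [abs_sub_comm y x] at this
        linarith
    _ < ε := by linarith [hab i]

section WeakLimit

variable {l : Filter ι} {ξ : ι → Ω → ℝ} {h : Ω → ℝ}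

lemma tendsto_integral_simpleFunc_mul (hξ : ∀ i, Integrable (ξ i) μ) (hh : Integrable h μ)
    (hlim : ∀ A, MeasurableSet A →
      Tendsto (fun i => ∫ x in A, ξ i x ∂μ) l (𝓝 (∫ x in A, h x ∂μ)))
    (φ : SimpleFunc Ω ℝ) :
    Tendsto (fun i => ∫ x, φ x * ξ i x ∂μ) l (𝓝 (∫ x, φ x * h x ∂μ)) := by
  have hmul : ∀ (ψ : SimpleFunc Ω ℝ) {f : Ω → ℝ}, Integrable f μ →
      Integrable (fun x => ψ x * f x) μ := fun ψ f hf => by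
    obtain ⟨C, hC⟩ := ψ.exists_forall_norm_le
    exact hf.bdd_mul ψ.aestronglyMeasurable (.of_forall hC)
  induction φ using SimpleFunc.induction with
  | @const c s hs =>
    have hind : ∀ f : Ω → ℝ, ∫ x, (SimpleFunc.piecewise s hs (.const Ω c) (.const Ω 0)) x * f x ∂μ
        = c * ∫ x in s, f x ∂μ := fun f => by
      rw [← integral_const_mul, ← integral_indicator hs]
      congr 1 with x
      by_cases hx : x ∈ s <;> simp [hx]
    simp only [hind]
    exact (hlim _ hs).const_mul c
  | @add φ ψ _ hφ hψ =>
    have hadd : ∀ f : Ω → ℝ, Integrable f μ → ∫ x, (φ + ψ) x * f x ∂μ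
        = ∫ x, φ x * f x ∂μ + ∫ x, ψ x * f x ∂μ := fun f hf => by
      simp only [SimpleFunc.coe_add, Pi.add_apply, add_mul]
      exact integral_add (hmul φ hf) (hmul ψ hf)
    simp only [hadd _ (hξ _), hadd h hh]
    exact hφ.add hψ

lemma tendsto_integral_mul_of_tendsto_setIntegral (hξ : ∀ i, Integrable (ξ i) μ) {C : ℝ}
    (hbdd : ∀ i, ∫ x, ‖ξ i x‖ ∂μ ≤ C) (hh : Integrable h μ)
    (hlim : ∀ A, MeasurableSet A →
      Tendsto (fun i => ∫ x in A, ξ i x ∂μ) l (𝓝 (∫ x in A, h x ∂μ)))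
    {g : Ω → ℝ} (hg : Measurable g) {K : ℝ} (hgK : ∀ x, |g x| ≤ K) :
    Tendsto (fun i => ∫ x, g x * ξ i x ∂μ) l (𝓝 (∫ x, g x * h x ∂μ)) := by
  refine tendsto_of_forall_approx fun δ hδ => ?_
  set D := max C (∫ x, ‖h x‖ ∂μ) + 1
  have hCD : C ≤ D := by linarith [le_max_left C (∫ x, ‖h x‖ ∂μ)]
  have hhD : ∫ x, ‖h x‖ ∂μ ≤ D := by linarith [le_max_right C (∫ x, ‖h x‖ ∂μ)]
  have hD : 0 < D := by
    linarith [integral_nonneg (μ := μ) (f := fun x => ‖h x‖) fun x => norm_nonneg _,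
      le_max_right C (∫ x, ‖h x‖ ∂μ)]
  obtain ⟨φ, hφ⟩ := exists_simpleFunc_forall_abs_sub_le hg hgK (div_pos hδ hD)
  have hclose : ∀ {f : Ω → ℝ}, Integrable f μ → ∫ x, ‖f x‖ ∂μ ≤ D →
      |∫ x, g x * f x ∂μ - ∫ x, φ x * f x ∂μ| ≤ δ := fun {f} hf hfD => by
    obtain ⟨Kφ, hKφ⟩ := φ.exists_forall_norm_le
    have hgf : Integrable (fun x => g x * f x) μ :=
      hf.bdd_mul hg.aestronglyMeasurable
        (.of_forall fun x => (hgK x).trans_eq' (Real.norm_eq_abs _))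
    rw [← integral_sub hgf (hf.bdd_mul φ.aestronglyMeasurable (.of_forall hKφ))]
    calc |∫ x, (g x * f x - φ x * f x) ∂μ|
        ≤ ∫ x, δ / D * ‖f x‖ ∂μ := by
          rw [← Real.norm_eq_abs]
          refine norm_integral_le_of_norm_le (hf.norm.const_mul _) (.of_forall fun x => ?_)
          rw [← sub_mul, norm_mul, Real.norm_eq_abs]
          exact mul_le_mul_of_nonneg_right (hφ x) (norm_nonneg _)
      _ = δ / D * ∫ x, ‖f x‖ ∂μ := integral_const_mul _ _
      _ ≤ δ / D * D := mul_le_mul_of_nonneg_left hfD (div_pos hδ hD).le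
      _ = δ := div_mul_cancel₀ δ hD.ne'
  exact ⟨_, _, tendsto_integral_simpleFunc_mul hξ hh hlim φ,
    fun i => hclose (hξ i) ((hbdd i).trans hCD), hclose hh hhD⟩

lemma tendsto_setIntegral_of_le_smul [IsFiniteMeasure μ] {Q : Measure Ω} {c : ℝ≥0∞} (hc : c ≠ ∞)
    (hQ : Q ≤ c • μ) (hξ : ∀ i, Integrable (ξ i) μ) {C : ℝ} (hbdd : ∀ i, ∫ x, ‖ξ i x‖ ∂μ ≤ C)
    (hh : Integrable h μ)
    (hlim : ∀ A, MeasurableSet A →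
      Tendsto (fun i => ∫ x in A, ξ i x ∂μ) l (𝓝 (∫ x in A, h x ∂μ)))
    {A : Set Ω} (hA : MeasurableSet A) :
    Tendsto (fun i => ∫ x in A, ξ i x ∂Q) l (𝓝 (∫ x in A, h x ∂Q)) := by
  have : IsFiniteMeasure Q :=
    ⟨(hQ univ).trans_lt (ENNReal.mul_lt_top hc.lt_top (measure_lt_top μ univ))⟩
  have hQμ : Q ≪ μ :=
    (Measure.absolutelyContinuous_of_le hQ).trans Measure.smul_absolutelyContinuous
  -- `dQ/dμ ≤ c` only a.e.; the truncation is bounded everywhere, as the approximation lemma needs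
  set z : Ω → ℝ := fun x => min (Q.rnDeriv μ x).toReal c.toReal
  have hz : ∀ᵐ x ∂μ, (Q.rnDeriv μ x).toReal = z x := by
    filter_upwards [Measure.rnDeriv_le_of_le_smul hQ] with x hx
    exact (min_eq_left (ENNReal.toReal_mono hc hx)).symm
  have hdensity : ∀ f : Ω → ℝ, ∫ x in A, f x ∂Q = ∫ x in A, z x * f x ∂μ := fun f => by
    rw [← setIntegral_toReal_rnDeriv_mul hQμ hA]
    exact setIntegral_congr_ae hA (hz.mono fun x hx _ => by rw [hx])
  simp only [hdensity]
  refine tendsto_integral_mul_of_tendsto_setIntegral (μ := μ.restrict A)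
    (fun i => (hξ i).restrict) (C := C)
    (fun i => (setIntegral_le_integral (hξ i).norm (.of_forall fun x => norm_nonneg _)).trans
      (hbdd i))
    hh.restrict
    (fun B hB => by simpa only [Measure.restrict_restrict hB] using hlim _ (hB.inter hA))
    ((Q.measurable_rnDeriv μ).ennreal_toReal.min measurable_const) (K := c.toReal) fun x => ?_
  rw [abs_of_nonneg (le_min ENNReal.toReal_nonneg ENNReal.toReal_nonneg)]
  exact min_le_right _ _

end WeakLimit

lemma ae_le_of_forall_setIntegral_le_of_stronglyMeasurable {m : MeasurableSpace Ω} (hm : m ≤ m0)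
    {f g : Ω → ℝ} (hfm : StronglyMeasurable[m] f) (hgm : StronglyMeasurable[m] g)
    (hf : Integrable f μ) (hg : Integrable g μ)
    (hfg : ∀ A, MeasurableSet[m] A → ∫ x in A, f x ∂μ ≤ ∫ x in A, g x ∂μ) : f ≤ᵐ[μ] g := by
  refine ae_le_of_ae_le_trim (ae_le_of_forall_setIntegral_le (hf.trim hm hfm) (hg.trim hm hgm)
    fun A hA _ => ?_)
  rw [← setIntegral_trim hm hfm hA, ← setIntegral_trim hm hgm hA]
  exact hfg A hA

lemma ae_le_mul_condExp_of_tendsto {m : MeasurableSpace Ω} (hm : m ≤ m0)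
    [SigmaFinite (μ.trim hm)] {f : Ω → ℝ} (hfm : StronglyMeasurable[m] f) (hf : Integrable f μ)
    {l : Filter ι} [l.NeBot] {u : ι → ℝ} {a : ℝ} (hu : Tendsto u l (𝓝 a))
    {ξ : ι → Ω → ℝ} (hξ : ∀ i, Integrable (ξ i) μ)
    (hle : ∀ i, ∀ᵐ x ∂μ, f x ≤ u i * μ[ξ i|m] x) {ζ : Ω → ℝ} (hζ : Integrable ζ μ)
    (hlim : ∀ A, MeasurableSet[m] A →
      Tendsto (fun i => ∫ x in A, ξ i x ∂μ) l (𝓝 (∫ x in A, ζ x ∂μ))) :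
    ∀ᵐ x ∂μ, f x ≤ a * μ[ζ|m] x := by
  have hcond : ∀ (b : ℝ) {g : Ω → ℝ}, Integrable g μ → ∀ A, MeasurableSet[m] A →
      ∫ x in A, b * μ[g|m] x ∂μ = b * ∫ x in A, g x ∂μ := fun b g hg A hA => by
    rw [integral_const_mul, setIntegral_condExp hm hg hA]
  refine ae_le_of_forall_setIntegral_le_of_stronglyMeasurable hm hfm
    (stronglyMeasurable_condExp.const_mul a) hf (integrable_condExp.const_mul a) fun A hA => ?_
  rw [hcond a hζ A hA]
  refine le_of_tendsto_of_tendsto tendsto_const_nhds (hu.mul (hlim A hA)) (.of_forall fun i => ?_)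
  show ∫ x in A, f x ∂μ ≤ u i * ∫ x in A, ξ i x ∂μ
  rw [← hcond (u i) (hξ i) A hA]
  exact setIntegral_mono_ae hf.integrableOn (integrable_condExp.const_mul _).integrableOn (hle i)

lemma integral_le_of_ae_le_mul_condExp {m : MeasurableSpace Ω} (hm : m ≤ m0)
    [SigmaFinite (μ.trim hm)] {f ζ : Ω → ℝ} (hf : Integrable f μ) {a : ℝ}
    (hle : ∀ᵐ x ∂μ, f x ≤ a * μ[ζ|m] x) : ∫ x, f x ∂μ ≤ a * ∫ x, ζ x ∂μ := by
  rw [← integral_condExp hm (f := ζ), ← integral_const_mul]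
  exact integral_mono_ae hf (integrable_condExp.const_mul a) hle

lemma exists_le_smul_of_convex {M : Set (Measure Ω)}
    (hconvex : ∀ P ∈ M, ∀ Q ∈ M, ∀ α : ℝ, 0 ≤ α → α ≤ 1 →
      (ENNReal.ofReal (1 - α)) • P + (ENNReal.ofReal α) • Q ∈ M)
    {P Q : Measure Ω} (hP : P ∈ M) (hQ : Q ∈ M) :
    ∃ ρ ∈ M, ∃ c ≠ ∞, P ≤ c • ρ ∧ Q ≤ c • ρ := by
  refine ⟨_, hconvex P hP Q hQ 2⁻¹ (by norm_num) (by norm_num), (2 : ℝ≥0∞),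
    ENNReal.ofNat_ne_top, ?_⟩
  have hhalf : ENNReal.ofReal 2⁻¹ = 2⁻¹ := by
    rw [ENNReal.ofReal_inv_of_pos two_pos, ENNReal.ofReal_ofNat]
  have hsum : (2 : ℝ≥0∞) • ((2⁻¹ : ℝ≥0∞) • P + (2⁻¹ : ℝ≥0∞) • Q) = P + Q := by
    rw [smul_add, smul_smul, smul_smul, ENNReal.mul_inv_cancel two_ne_zero ENNReal.ofNat_ne_top,
      one_smul, one_smul]
  rw [show (1 - 2⁻¹ : ℝ) = 2⁻¹ by norm_num, hhalf, hsum]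
  exact ⟨Measure.le_add_right le_rfl, Measure.le_add_left le_rfl⟩

theorem exists_forall_mem_tendsto_setIntegral {M : Set (Measure Ω)}
    (hfin : ∀ P ∈ M, IsFiniteMeasure P) (hequiv : ∀ P ∈ M, ∀ Q ∈ M, P ≪ Q)
    (hdir : ∀ P ∈ M, ∀ Q ∈ M, ∃ ρ ∈ M, ∃ c ≠ ∞, P ≤ c • ρ ∧ Q ≤ c • ρ)
    (𝒰 : Ultrafilter ι) {ξ : ι → Ω → ℝ} (hpos : ∀ i x, 0 ≤ ξ i x)
    (hint : ∀ P ∈ M, ∀ i, Integrable (ξ i) P) {C : ℝ} (hbdd : ∀ P ∈ M, ∀ i, ∫ x, ξ i x ∂P ≤ C)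
    (hui : ∀ P ∈ M, UnifIntegrable ξ 1 P) :
    ∃ ζ : Ω → ℝ, (∀ x, 0 ≤ ζ x) ∧ ∀ P ∈ M, Integrable ζ P ∧ ∀ A, MeasurableSet A →
      Tendsto (fun i => ∫ x in A, ξ i x ∂P) 𝒰 (𝓝 (∫ x in A, ζ x ∂P)) := by
  rcases M.eq_empty_or_nonempty with rfl | ⟨P₀, hP₀⟩
  · exact ⟨0, fun _ => le_rfl, by simp⟩
  have hlim : ∀ ρ ∈ M, ∃ h : Ω → ℝ, (∀ x, 0 ≤ h x) ∧ Integrable h ρ ∧ ∀ A, MeasurableSet A →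
      Tendsto (fun i => ∫ x in A, ξ i x ∂ρ) 𝒰 (𝓝 (∫ x in A, h x ∂ρ)) := fun ρ hρ =>
    have := hfin ρ hρ
    exists_tendsto_setIntegral_of_unifIntegrable 𝒰 hpos (hint ρ hρ) (hbdd ρ hρ) (hui ρ hρ)
  choose! h hh0 hhint hhlim using hlim
  refine ⟨h P₀, hh0 P₀ hP₀, fun Q hQ => ?_⟩
  -- the limit densities computed under `P₀` and under `Q` are both read off one dominating `ρ`
  obtain ⟨ρ, hρ, c, hc, hP₀ρ, hQρ⟩ := hdir P₀ hP₀ Q hQ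
  have := hfin ρ hρ
  have hnorm : ∀ i, ∫ x, ‖ξ i x‖ ∂ρ ≤ C := fun i => by
    simpa only [Real.norm_of_nonneg (hpos i _)] using hbdd ρ hρ i
  have hρint : ∀ P, P ≤ c • ρ → Integrable (h ρ) P := fun P hP =>
    ((hhint ρ hρ).smul_measure hc).mono_measure hP
  have htransfer : ∀ P, P ≤ c • ρ → ∀ A, MeasurableSet A →
      Tendsto (fun i => ∫ x in A, ξ i x ∂P) 𝒰 (𝓝 (∫ x in A, h ρ x ∂P)) := fun P hP A hA =>
    tendsto_setIntegral_of_le_smul hc hP (hint ρ hρ) hnorm (hhint ρ hρ) (hhlim ρ hρ) hA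
  have hae : h ρ =ᵐ[P₀] h P₀ :=
    (hρint P₀ hP₀ρ).ae_eq_of_forall_setIntegral_eq _ _ (hhint P₀ hP₀) fun A hA _ =>
      tendsto_nhds_unique (htransfer P₀ hP₀ρ A hA) (hhlim P₀ hP₀ A hA)
  have haeQ : h ρ =ᵐ[Q] h P₀ := (hequiv Q hQ P₀ hP₀).ae_eq hae
  refine ⟨(hρint Q hQρ).congr haeQ, fun A hA => ?_⟩
  rw [← setIntegral_congr_ae hA (haeQ.mono fun x hx _ => hx)]
  exact htransfer Q hQρ A hA

end MeasureTheory

theorem stmt19_general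
    {Ω : Type*} {m0 : MeasurableSpace Ω} (ℱ : Filtration ℕ m0)
    (M : Set (Measure Ω))
    (hprob : ∀ P ∈ M, IsProbabilityMeasure P)
    (hconvex : ∀ P ∈ M, ∀ Q ∈ M, ∀ α : ℝ, 0 ≤ α → α ≤ 1 →
      (ENNReal.ofReal (1 - α)) • P + (ENNReal.ofReal α) • Q ∈ M)
    (hequiv : ∀ P ∈ M, ∀ Q ∈ M, P ≪ Q)
    (A₀ : Set (Ω → ℝ))
    (hA₀ : A₀ = {ξ : Ω → ℝ | (∀ ω, 0 ≤ ξ ω) ∧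
      ∀ P ∈ M, Integrable ξ P ∧ ∫ ω, ξ ω ∂P = 1})
    (hUI : ∀ P ∈ M, UnifIntegrable (fun ξ : A₀ => (ξ : Ω → ℝ)) 1 P)
    (Nn : ℕ) (fN : Ω → ℝ)
    (hfNmeas : StronglyMeasurable[ℱ Nn] fN)
    (hfNint : ∀ P ∈ M, Integrable fN P)
    (α₀ : ℝ) (hα₀ : 0 ≤ α₀) (ξ₀ : Ω → ℝ) (hξ₀ : ξ₀ ∈ A₀)
    (hdom : ∀ P ∈ M, ∀ᵐ ω ∂P, fN ω ≤ α₀ * (P[ξ₀ | ℱ Nn]) ω) :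
    (∃ ζ₀ ∈ A₀, ∀ P ∈ M, ∀ᵐ ω ∂P,
      fN ω ≤
        (sInf {α : ℝ | α ∈ Set.Icc 0 α₀ ∧ ∃ ξ ∈ A₀,
            ∀ P' ∈ M, ∀ᵐ ω' ∂P', fN ω' ≤ α * (P'[ξ | ℱ Nn]) ω'}) *
          (P[ζ₀ | ℱ Nn]) ω) ∧
    (∀ P ∈ M, ∫ ω, fN ω ∂P ≤
      sInf {α : ℝ | α ∈ Set.Icc 0 α₀ ∧ ∃ ξ ∈ A₀,
        ∀ P' ∈ M, ∀ᵐ ω' ∂P', fN ω' ≤ α * (P'[ξ | ℱ Nn]) ω'}) := by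
  set G := {α : ℝ | α ∈ Set.Icc 0 α₀ ∧ ∃ ξ ∈ A₀,
    ∀ P' ∈ M, ∀ᵐ ω' ∂P', fN ω' ≤ α * (P'[ξ | ℱ Nn]) ω'}
  have hGne : G.Nonempty := ⟨α₀, ⟨hα₀, le_rfl⟩, ξ₀, hξ₀, hdom⟩
  obtain ⟨u, -, hu, huG⟩ := exists_seq_tendsto_sInf hGne ⟨0, fun α hα => hα.1.1⟩
  choose ξ hξA hξle using fun n => (huG n).2
  have hξ : ∀ n, (∀ ω, 0 ≤ ξ n ω) ∧ ∀ P ∈ M, Integrable (ξ n) P ∧ ∫ ω, ξ n ω ∂P = 1 :=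
    fun n => by simpa [hA₀] using hξA n
  obtain ⟨ζ, hζ0, hζ⟩ := exists_forall_mem_tendsto_setIntegral
    (fun P hP => have := hprob P hP; inferInstance) hequiv
    (fun P hP Q hQ => exists_le_smul_of_convex hconvex hP hQ) (Ultrafilter.of atTop)
    (fun n => (hξ n).1) (fun P hP n => ((hξ n).2 P hP).1) (C := 1)
    (fun P hP n => ((hξ n).2 P hP).2.le) (fun P hP => (hUI P hP).comp fun n => ⟨ξ n, hξA n⟩)
  have hζ1 : ∀ P ∈ M, ∫ ω, ζ ω ∂P = 1 := fun P hP => by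
    refine tendsto_nhds_unique (by simpa using (hζ P hP).2 univ .univ)
      (tendsto_const_nhds.congr fun n => ?_)
    simp [((hξ n).2 P hP).2]
  have hfair : ∀ P ∈ M, ∀ᵐ ω ∂P, fN ω ≤ sInf G * P[ζ|ℱ Nn] ω := fun P hP =>
    have := hprob P hP
    ae_le_mul_condExp_of_tendsto (ℱ.le Nn) hfNmeas (hfNint P hP)
      (hu.mono_left (Ultrafilter.of_le _)) (fun n => ((hξ n).2 P hP).1) (fun n => hξle n P hP)
      (hζ P hP).1 fun A hA => (hζ P hP).2 A (ℱ.le Nn A hA)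
  have hζA : ζ ∈ A₀ := by simpa [hA₀] using ⟨hζ0, fun P hP => ⟨(hζ P hP).1, hζ1 P hP⟩⟩
  refine ⟨⟨ζ, hζA, hfair⟩, fun P hP => ?_⟩
  have := hprob P hP
  simpa [hζ1 P hP] using integral_le_of_ae_le_mul_condExp (ℱ.le Nn) (hfNint P hP) (hfair P hP)

/-- Existence of a fair price. Let `A₀` be the (uniformly integrable) set
of nonnegative random variables with unit expectation under every `P ∈ M`. If the
nonnegative `ℱ N`-measurable contingent claim `f_N` satisfies
`f_N ≤ α₀ E^P[ξ₀ | ℱ N]` a.s. for some `ξ₀ ∈ A₀` and `α₀ < ∞`, then for the fair price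
`f₀ = inf {α ∈ [0, α₀] | ∃ ξ_α ∈ A₀, f_N ≤ α E^P[ξ_α | ℱ N] a.s.}` there exists
`ζ₀ ∈ A₀` with `f_N ≤ f₀ E^P[ζ₀ | ℱ N]` a.s., and consequently
`E^P f_N ≤ f₀` for every `P ∈ M`. -/
theorem stmt19
    {Ω : Type*} {m0 : MeasurableSpace Ω} (ℱ : Filtration ℕ m0)
    (M : Set (Measure Ω))
    (hprob : ∀ P ∈ M, IsProbabilityMeasure P)
    (hconvex : ∀ P ∈ M, ∀ Q ∈ M, ∀ α : ℝ, 0 ≤ α → α ≤ 1 →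
      (ENNReal.ofReal (1 - α)) • P + (ENNReal.ofReal α) • Q ∈ M)
    (hequiv : ∀ P ∈ M, ∀ Q ∈ M, P ≪ Q)
    (A₀ : Set (Ω → ℝ))
    (hA₀ : A₀ = {ξ : Ω → ℝ | (∀ ω, 0 ≤ ξ ω) ∧
      ∀ P ∈ M, Integrable ξ P ∧ ∫ ω, ξ ω ∂P = 1})
    (hUI : ∀ P ∈ M, UnifIntegrable (fun ξ : A₀ => (ξ : Ω → ℝ)) 1 P)
    (Nn : ℕ) (fN : Ω → ℝ)
    (hfN0 : ∀ ω, 0 ≤ fN ω)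
    (hfNmeas : StronglyMeasurable[ℱ Nn] fN)
    (hfNint : ∀ P ∈ M, Integrable fN P)
    (α₀ : ℝ) (hα₀ : 0 ≤ α₀) (ξ₀ : Ω → ℝ) (hξ₀ : ξ₀ ∈ A₀)
    (hdom : ∀ P ∈ M, ∀ᵐ ω ∂P, fN ω ≤ α₀ * (P[ξ₀ | ℱ Nn]) ω) :
    (∃ ζ₀ ∈ A₀, ∀ P ∈ M, ∀ᵐ ω ∂P,
      fN ω ≤
        (sInf {α : ℝ | α ∈ Set.Icc 0 α₀ ∧ ∃ ξ ∈ A₀,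
            ∀ P' ∈ M, ∀ᵐ ω' ∂P', fN ω' ≤ α * (P'[ξ | ℱ Nn]) ω'}) *
          (P[ζ₀ | ℱ Nn]) ω) ∧
    (∀ P ∈ M, ∫ ω, fN ω ∂P ≤
      sInf {α : ℝ | α ∈ Set.Icc 0 α₀ ∧ ∃ ξ ∈ A₀,
        ∀ P' ∈ M, ∀ᵐ ω' ∂P', fN ω' ≤ α * (P'[ξ | ℱ Nn]) ω'}) :=
  stmt19_general ℱ M hprob hconvex hequiv A₀ hA₀ hUI Nn fN hfNmeas hfNint α₀ hα₀ ξ₀ hξ₀ hdom
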